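/- Let h be a smooth solution of the Hele-Shaw equation on [0,T]. Then at every point (t,x) there holds the identity B² + |V|² = ((∂_t h)² + |∇_x h|²) / (1 + |∇_x h|²) = |∇_{t,x}h|² / (1 + |∇_x h|²), where B = B(h)h and V = V(h)h. -/

import Mathlib

open MeasureTheory
open scoped Classical

noncomputable section

/-- ℤⁿ-periodicity for functions on ℝⁿ (model for functions on the torus 𝕋ⁿ = ℝⁿ/ℤⁿ). -/
def ZPeriodic (n : ℕ) (f : (Fin n → ℝ) → ℝ) : Prop :=
  ∀ (x : Fin n → ℝ) (k : Fin n → ℤ), f (x + fun i => (k i : ℝ)) = f x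

/-- ℤⁿ-periodicity in the horizontal variable for functions on ℝⁿ × ℝ. -/
def ZPeriodicE (n : ℕ) (φ : (Fin n → ℝ) × ℝ → ℝ) : Prop :=
  ∀ (x : Fin n → ℝ) (y : ℝ) (k : Fin n → ℤ), φ (x + fun i => (k i : ℝ), y) = φ (x, y)

/-- Fundamental cell of the torus 𝕋ⁿ. -/
def cell (n : ℕ) : Set (Fin n → ℝ) := Set.univ.pi fun _ => Set.Ico (0:ℝ) 1

/-- i-th partial derivative of a function on ℝⁿ. -/
def pdX (n : ℕ) (f : (Fin n → ℝ) → ℝ) (i : Fin n) (x : Fin n → ℝ) : ℝ :=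
  fderiv ℝ f x (Pi.single i 1)

/-- Directional derivative of a function on ℝⁿ × ℝ. -/
def pdE (n : ℕ) (φ : (Fin n → ℝ) × ℝ → ℝ) (v : (Fin n → ℝ) × ℝ)
    (p : (Fin n → ℝ) × ℝ) : ℝ := fderiv ℝ φ p v

def eX (n : ℕ) (i : Fin n) : (Fin n → ℝ) × ℝ := (Pi.single i 1, 0)
def eY (n : ℕ) : (Fin n → ℝ) × ℝ := (0, 1)

/-- Laplacian Δ_{x,y} on ℝⁿ × ℝ. -/
def lapE (n : ℕ) (φ : (Fin n → ℝ) × ℝ → ℝ) (p : (Fin n → ℝ) × ℝ) : ℝ :=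
  (∑ i, pdE n (pdE n φ (eX n i)) (eX n i) p) + pdE n (pdE n φ (eY n)) (eY n) p

/-- |∇_{x,y}φ|². -/
def gradSqE (n : ℕ) (φ : (Fin n → ℝ) × ℝ → ℝ) (p : (Fin n → ℝ) × ℝ) : ℝ :=
  (∑ i, (pdE n φ (eX n i) p)^2) + (pdE n φ (eY n) p)^2

/-- One periodic cell of the fluid domain Ω(h) = {y < h(x)}. -/
def fluidCell (n : ℕ) (h : (Fin n → ℝ) → ℝ) : Set ((Fin n → ℝ) × ℝ) :=
  {p | p.1 ∈ cell n ∧ p.2 < h p.1}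

/-- φ is the harmonic extension of ψ to Ω(h) = {y < h(x)}: it is harmonic in Ω(h),
has boundary value ψ, is periodic in x, and has square-integrable gradient. -/
structure IsHarmonicExt (n : ℕ) (h ψ : (Fin n → ℝ) → ℝ)
    (φ : (Fin n → ℝ) × ℝ → ℝ) : Prop where
  smooth : ContDiff ℝ (⊤ : ℕ∞) φ
  periodic : ZPeriodicE n φ
  harmonic : ∀ p : (Fin n → ℝ) × ℝ, p.2 < h p.1 → lapE n φ p = 0
  boundary : ∀ x, φ (x, h x) = ψ x
  gradL2 : IntegrableOn (gradSqE n φ) (fluidCell n h)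

/-- The Dirichlet-to-Neumann operator:
(G(h)ψ)(x) = ∂_yφ(x,h(x)) − ∇h(x)·∇_xφ(x,h(x)), where φ is the harmonic extension of ψ. -/
def DtN (n : ℕ) (h ψ : (Fin n → ℝ) → ℝ) : (Fin n → ℝ) → ℝ :=
  if H : ∃ φ, IsHarmonicExt n h ψ φ then
    fun x => pdE n H.choose (eY n) (x, h x)
      - ∑ i, pdX n h i x * pdE n H.choose (eX n i) (x, h x)
  else 0

/-- (B(h)ψ)(x) = ∂_yφ(x,h(x)). -/
def Bop (n : ℕ) (h ψ : (Fin n → ℝ) → ℝ) : (Fin n → ℝ) → ℝ :=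
  if H : ∃ φ, IsHarmonicExt n h ψ φ then
    fun x => pdE n H.choose (eY n) (x, h x)
  else 0

/-- (V(h)ψ)(x) = ∇_xφ(x,h(x)). -/
def Vop (n : ℕ) (h ψ : (Fin n → ℝ) → ℝ) : (Fin n → ℝ) → Fin n → ℝ :=
  if H : ∃ φ, IsHarmonicExt n h ψ φ then
    fun x i => pdE n H.choose (eX n i) (x, h x)
  else 0

/-- Divergence of a vector field on the torus. -/
def divX (n : ℕ) (W : (Fin n → ℝ) → Fin n → ℝ) (x : Fin n → ℝ) : ℝ :=
  ∑ i, pdX n (fun z => W z i) i x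

/-- h is a smooth solution of the Hele-Shaw equation ∂ₜh + G(h)h = 0 on [0,T]. -/
structure IsHeleShawSol (n : ℕ) (T : ℝ) (h : ℝ → (Fin n → ℝ) → ℝ) : Prop where
  smooth : ContDiff ℝ (⊤ : ℕ∞) (Function.uncurry h)
  periodic : ∀ t : ℝ, ZPeriodic n (h t)
  extension : ∀ t ∈ Set.Icc 0 T, ∃ φ, IsHarmonicExt n (h t) (h t) φ
  equation : ∀ t ∈ Set.Icc 0 T, ∀ x, deriv (fun s => h s x) t + DtN n (h t) (h t) x = 0

/-- B(t,x) = (B(h(t,·))h(t,·))(x). -/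
def HSB (n : ℕ) (h : ℝ → (Fin n → ℝ) → ℝ) (t : ℝ) (x : Fin n → ℝ) : ℝ :=
  Bop n (h t) (h t) x

/-- V(t,x) = (V(h(t,·))h(t,·))(x). -/
def HSV (n : ℕ) (h : ℝ → (Fin n → ℝ) → ℝ) (t : ℝ) (x : Fin n → ℝ) : Fin n → ℝ :=
  Vop n (h t) (h t) x

/-- The Rayleigh–Taylor coefficient a = 1 − B. -/
def HSa (n : ℕ) (h : ℝ → (Fin n → ℝ) → ℝ) (t : ℝ) (x : Fin n → ℝ) : ℝ :=
  1 - HSB n h t x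

/-- γ = (1+|∇h|²)⁻¹ ( G(h)(B²+|V|²) − 2B G(h)B − 2V·G(h)V ). -/
def HSgamma (n : ℕ) (h : ℝ → (Fin n → ℝ) → ℝ) (t : ℝ) (x : Fin n → ℝ) : ℝ :=
  (1 + ∑ i, (pdX n (h t) i x)^2)⁻¹ *
    ( DtN n (h t) (fun z => (HSB n h t z)^2 + ∑ i, (HSV n h t z i)^2) x
      - 2 * HSB n h t x * DtN n (h t) (fun z => HSB n h t z) x
      - 2 * ∑ i, HSV n h t x i * DtN n (h t) (fun z => HSV n h t z i) x )

/-- L(h)f = −V·∇f − ½(div V)f + √a G(h)(√a f). -/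
def Lop (n : ℕ) (h : ℝ → (Fin n → ℝ) → ℝ) (t : ℝ) (f : (Fin n → ℝ) → ℝ)
    (x : Fin n → ℝ) : ℝ :=
  - (∑ i, HSV n h t x i * pdX n f i x)
  - (1/2) * divX n (HSV n h t) x * f x
  + Real.sqrt (HSa n h t x) * DtN n (h t) (fun z => Real.sqrt (HSa n h t z) * f z) x

/-!
Differentiating the boundary condition `φ(x, h x) = h x` along the graph gives
`V + B ∇h = ∇h`, i.e. `V = (1 - B) ∇h`. Hence `G(h)h = B - ∇h · V = B - (1 - B)|∇h|²`,
and the Hele-Shaw equation expresses `∂ₜh` through `B` and `|∇h|²` alone; the identity is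
then a rational identity in `B` and `|∇h|²`.
-/

theorem pdX_comp_graph {n : ℕ} {φ : (Fin n → ℝ) × ℝ → ℝ} {f : (Fin n → ℝ) → ℝ}
    {x : Fin n → ℝ} (hφ : DifferentiableAt ℝ φ (x, f x)) (hf : DifferentiableAt ℝ f x)
    (i : Fin n) :
    pdX n (fun z => φ (z, f z)) i x
      = pdE n φ (eX n i) (x, f x) + pdX n f i x * pdE n φ (eY n) (x, f x) := by
  have hgraph : HasFDerivAt (fun z => (z, f z))
      ((ContinuousLinearMap.id ℝ (Fin n → ℝ)).prod (fderiv ℝ f x)) x :=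
    (hasFDerivAt_id x).prodMk hf.hasFDerivAt
  have hsplit : (Pi.single i 1, fderiv ℝ f x (Pi.single i 1))
      = eX n i + fderiv ℝ f x (Pi.single i 1) • eY n := by
    simp [eX, eY]
  have hcomp : HasFDerivAt (fun z => φ (z, f z))
      ((fderiv ℝ φ (x, f x)).comp ((ContinuousLinearMap.id ℝ _).prod (fderiv ℝ f x))) x :=
    hφ.hasFDerivAt.comp x hgraph
  rw [pdX, hcomp.fderiv]
  simp only [ContinuousLinearMap.comp_apply, ContinuousLinearMap.prod_apply,
    ContinuousLinearMap.id_apply, hsplit, map_add, map_smul, smul_eq_mul, pdE, pdX]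

theorem DtN_eq_Bop_sub_sum (n : ℕ) (h ψ : (Fin n → ℝ) → ℝ) (x : Fin n → ℝ) :
    DtN n h ψ x = Bop n h ψ x - ∑ i, pdX n h i x * Vop n h ψ x i := by
  by_cases H : ∃ φ, IsHarmonicExt n h ψ φ
  · simp only [DtN, Bop, Vop, dif_pos H]
  · simp [DtN, Bop, Vop, dif_neg H]

theorem Vop_apply_eq {n : ℕ} {h ψ : (Fin n → ℝ) → ℝ} {x : Fin n → ℝ}
    (hh : DifferentiableAt ℝ h x) (H : ∃ φ, IsHarmonicExt n h ψ φ) (i : Fin n) :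
    Vop n h ψ x i = pdX n ψ i x - Bop n h ψ x * pdX n h i x := by
  have hφ := H.choose_spec
  have htrace : (fun z => H.choose (z, h z)) = ψ := funext hφ.boundary
  have hchain := pdX_comp_graph
    ((hφ.smooth.differentiable (by norm_num)) (x, h x)) hh i
  rw [htrace] at hchain
  simp only [Vop, Bop, dif_pos H]
  linarith

theorem sq_add_sum_sq_eq_div {ι : Type*} [Fintype ι] {B d : ℝ} {g V : ι → ℝ}
    (hV : ∀ i, V i = (1 - B) * g i) (hd : d = -(B - ∑ i, g i * V i)) :
    B ^ 2 + ∑ i, V i ^ 2 = (d ^ 2 + ∑ i, g i ^ 2) / (1 + ∑ i, g i ^ 2) := by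
  set S := ∑ i, g i ^ 2
  have hVV : ∑ i, V i ^ 2 = (1 - B) ^ 2 * S := by
    rw [Finset.mul_sum]
    exact Finset.sum_congr rfl fun i _ => by rw [hV i]; ring
  have hgV : ∑ i, g i * V i = (1 - B) * S := by
    rw [Finset.mul_sum]
    exact Finset.sum_congr rfl fun i _ => by rw [hV i]; ring
  have hS : 0 < 1 + S := by
    have : 0 ≤ S := Finset.sum_nonneg fun i _ => sq_nonneg (g i)
    linarith
  rw [hVV, hd, hgV, eq_div_iff hS.ne']
  ring

theorem heleShaw_BV_identity_general (n : ℕ) (T : ℝ)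
    (h : ℝ → (Fin n → ℝ) → ℝ) (hsol : IsHeleShawSol n T h) :
    ∀ t ∈ Set.Icc 0 T, ∀ x,
      (HSB n h t x)^2 + ∑ i, (HSV n h t x i)^2
        = ((deriv (fun s => h s x) t)^2 + ∑ i, (pdX n (h t) i x)^2)
            / (1 + ∑ i, (pdX n (h t) i x)^2) := by
  intro t ht x
  have hslice : DifferentiableAt ℝ (h t) x :=
    (hsol.smooth.comp (contDiff_const.prodMk contDiff_id)).differentiable (by norm_num) x
  have hV (i : Fin n) : HSV n h t x i = (1 - HSB n h t x) * pdX n (h t) i x := by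
    rw [HSV, HSB, Vop_apply_eq hslice (hsol.extension t ht)]
    ring
  have hdt : deriv (fun s => h s x) t
      = -(HSB n h t x - ∑ i, pdX n (h t) i x * HSV n h t x i) := by
    have heq := hsol.equation t ht x
    rw [DtN_eq_Bop_sub_sum] at heq
    simp only [HSB, HSV]
    linarith
  exact sq_add_sum_sq_eq_div hV hdt

/-- for a smooth Hele-Shaw solution, pointwise
B² + |V|² = ((∂ₜh)² + |∇ₓh|²)/(1+|∇ₓh|²) = |∇_{t,x}h|²/(1+|∇ₓh|²). -/
theorem heleShaw_BV_identity (n : ℕ) (hn : 1 ≤ n) (T : ℝ) (hT : 0 ≤ T)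
    (h : ℝ → (Fin n → ℝ) → ℝ) (hsol : IsHeleShawSol n T h) :
    ∀ t ∈ Set.Icc 0 T, ∀ x,
      (HSB n h t x)^2 + ∑ i, (HSV n h t x i)^2
        = ((deriv (fun s => h s x) t)^2 + ∑ i, (pdX n (h t) i x)^2)
            / (1 + ∑ i, (pdX n (h t) i x)^2) :=
  heleShaw_BV_identity_general n T h hsol

end
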